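/- arXiv:1502.04525 — 3 statements merged into one kernel-verified Lean document; each statement's English description precedes it below -/
import Mathlib

section
/- Let u : Ω ⊂ ℝⁿ → ℝᵐ be a smooth function, g_{ij} = δ_{ij} + ⟨D_i u, D_j u⟩ the induced metric on the graph, and g_{αβ} = δ_{αβ} + ⟨Du_α, Du_β⟩ the normal metric. Then the squared norm of the second fundamental form |A|²_g = g^{ik} g^{jl} g^{αβ} (D²_{ij} u_α)(D²_{kl} u_β) satisfies |A|²_g ≤ |D²u|² ≤ (1 + |Du|²)³ |A|²_g, where |D²u|² = Σ_{i,j,α} (D²_{ij} u_α)². -/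
/-!
With `D = (D_i u_α)` the metrics are `g = 1 + D Dᵀ` and `g_N = 1 + Dᵀ D`. In the Loewner order a
positive semidefinite matrix is bounded by its trace, and `tr (D Dᵀ) = tr (Dᵀ D) = |Du|²`, so
`1 ≤ g, g_N ≤ (1 + |Du|²) • 1`; inverting, `(1 + |Du|²)⁻¹ • 1 ≤ g⁻¹, g_N⁻¹ ≤ 1`. The Kronecker
product `g⁻¹ ⊗ g⁻¹ ⊗ g_N⁻¹` then lies between `(1 + |Du|²)⁻³ • 1` and `1`, and its quadratic form
at the tensor `D²u` is `|A|²_g`.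
-/

open Matrix Set
open scoped MatrixOrder Kronecker ComplexOrder

namespace Matrix

variable {𝕜 ι ι' κ : Type*} [RCLike 𝕜] [Fintype ι] [Fintype ι'] [Fintype κ]

theorem kronecker_le_kronecker {A A' : Matrix ι ι 𝕜} {B B' : Matrix κ κ 𝕜}
    (hA : 0 ≤ A) (hAA' : A ≤ A') (hB : 0 ≤ B) (hBB' : B ≤ B') : A ⊗ₖ B ≤ A' ⊗ₖ B' := by
  have h : A' ⊗ₖ B' - A ⊗ₖ B = (A' - A) ⊗ₖ B' + A ⊗ₖ (B' - B) := by
    ext ⟨i, k⟩ ⟨j, l⟩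
    simp only [sub_apply, add_apply, kronecker_apply]
    ring
  rw [le_iff, h]
  exact ((le_iff.mp hAA').kronecker (hB.trans hBB').posSemidef).add
    (hA.posSemidef.kronecker (le_iff.mp hBB'))

section Loewner

variable [DecidableEq ι] [DecidableEq κ]

theorem kronecker_mem_Icc_smul_one {A : Matrix ι ι 𝕜} {B : Matrix κ κ 𝕜} {a b : ℝ}
    (ha : 0 ≤ a) (hb : 0 ≤ b) (hA : A ∈ Icc (a • 1) 1) (hB : B ∈ Icc (b • 1) 1) :
    A ⊗ₖ B ∈ Icc ((a * b) • 1) 1 := by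
  have ha' : (0 : Matrix ι ι 𝕜) ≤ a • 1 := smul_nonneg ha PosSemidef.one.nonneg
  have hb' : (0 : Matrix κ κ 𝕜) ≤ b • 1 := smul_nonneg hb PosSemidef.one.nonneg
  constructor
  · calc (a * b) • (1 : Matrix (ι × κ) (ι × κ) 𝕜)
        = (a • 1 : Matrix ι ι 𝕜) ⊗ₖ (b • 1 : Matrix κ κ 𝕜) := by
          rw [smul_kronecker, kronecker_smul, one_kronecker_one, smul_smul]
      _ ≤ A ⊗ₖ B := kronecker_le_kronecker ha' hA.1 hb' hB.1
  · calc A ⊗ₖ B ≤ (1 : Matrix ι ι 𝕜) ⊗ₖ (1 : Matrix κ κ 𝕜) :=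
          kronecker_le_kronecker (ha'.trans hA.1) hA.2 (hb'.trans hB.1) hB.2
      _ = 1 := one_kronecker_one

theorem inv_mem_Icc_of_mem_Icc {G : Matrix ι ι 𝕜} (hG : G.IsHermitian) {a b : ℝ}
    (ha : 0 < a) (h : G ∈ Icc (a • 1) (b • 1)) : G⁻¹ ∈ Icc (b⁻¹ • 1) (a⁻¹ • 1) := by
  simp only [mem_Icc, ← Algebra.algebraMap_eq_smul_one] at h ⊢
  have hspec : ∀ x ∈ spectrum ℝ G, a ≤ x ∧ x ≤ b := fun x hx =>
    ⟨(algebraMap_le_iff_le_spectrum hG.isSelfAdjoint).1 h.1 x hx,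
      (le_algebraMap_iff_spectrum_le hG.isSelfAdjoint).1 h.2 x hx⟩
  have hpos : ∀ x ∈ spectrum ℝ G, 0 < x := fun x hx => ha.trans_le (hspec x hx).1
  have hunit : IsUnit G :=
    ((StarOrderedRing.isStrictlyPositive_iff_spectrum_pos G hG.isSelfAdjoint).2 hpos).isUnit
  have hcont : ContinuousOn (fun x : ℝ => x⁻¹) (spectrum ℝ G) :=
    continuousOn_inv₀.mono fun x hx => (hpos x hx).ne'
  rw [nonsing_inv_eq_ringInverse, ← cfc_ringInverse_id (R := ℝ) G hunit hG.isSelfAdjoint]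
  exact ⟨algebraMap_le_cfc _ _ _ (fun x hx => inv_anti₀ (hpos x hx) (hspec x hx).2) hcont
      hG.isSelfAdjoint,
    cfc_le_algebraMap _ _ _ (fun x hx => inv_anti₀ ha (hspec x hx).1) hcont hG.isSelfAdjoint⟩

theorem PosSemidef.le_trace_smul_one {K : Matrix ι ι ℝ} (hK : K.PosSemidef) :
    K ≤ K.trace • (1 : Matrix ι ι ℝ) := by
  rw [← Algebra.algebraMap_eq_smul_one, le_algebraMap_iff_spectrum_le hK.isHermitian.isSelfAdjoint,
    hK.isHermitian.spectrum_real_eq_range_eigenvalues]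
  rintro _ ⟨i, rfl⟩
  rw [hK.isHermitian.trace_eq_sum_eigenvalues]
  simp only [Real.ringHom_apply]
  exact Finset.single_le_sum (fun j _ => hK.eigenvalues_nonneg j) (Finset.mem_univ i)

theorem PosSemidef.inv_one_add_mem_Icc {K : Matrix ι ι ℝ} (hK : K.PosSemidef) :
    (1 + K)⁻¹ ∈ Icc ((1 + K.trace)⁻¹ • 1) 1 := by
  have h : 1 + K ∈ Icc ((1 : ℝ) • 1) ((1 + K.trace) • 1) := by
    rw [one_smul, add_smul, one_smul]
    exact ⟨le_add_of_nonneg_right hK.nonneg, add_le_add_right hK.le_trace_smul_one 1⟩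
  simpa using inv_mem_Icc_of_mem_Icc (isHermitian_one.add hK.isHermitian) one_pos h

theorem dotProduct_mulVec_mem_Icc {M : Matrix ι ι ℝ} {c : ℝ} (hM : M ∈ Icc (c • 1) 1)
    (v : ι → ℝ) : v ⬝ᵥ (M *ᵥ v) ∈ Icc (c * (v ⬝ᵥ v)) (v ⬝ᵥ v) := by
  have hlower := (le_iff.mp hM.1).dotProduct_mulVec_nonneg v
  have hupper := (le_iff.mp hM.2).dotProduct_mulVec_nonneg v
  simp only [star_trivial, sub_mulVec, dotProduct_sub, smul_mulVec, one_mulVec, dotProduct_smul,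
    smul_eq_mul, sub_nonneg] at hlower hupper
  exact ⟨hlower, hupper⟩

end Loewner

theorem dotProduct_kronecker_kronecker_mulVec (A : Matrix ι ι ℝ) (A' : Matrix ι' ι' ℝ)
    (B : Matrix κ κ ℝ) (T : ι → ι' → κ → ℝ) :
    (fun p : ι × ι' × κ => T p.1 p.2.1 p.2.2) ⬝ᵥ
        ((A ⊗ₖ (A' ⊗ₖ B)) *ᵥ fun p : ι × ι' × κ => T p.1 p.2.1 p.2.2) =
      ∑ i, ∑ k, ∑ j, ∑ l, ∑ a, ∑ b, A i k * A' j l * B a b * T i j a * T k l b := by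
  simp only [dotProduct, mulVec, kronecker_apply, Fintype.sum_prod_type, Finset.mul_sum]
  refine Finset.sum_congr rfl fun i _ => ?_
  rw [Finset.sum_congr rfl fun j _ => Finset.sum_comm, Finset.sum_comm]
  refine Finset.sum_congr rfl fun k _ => Finset.sum_congr rfl fun j _ => ?_
  rw [Finset.sum_comm]
  refine Finset.sum_congr rfl fun l _ => Finset.sum_congr rfl fun a _ =>
    Finset.sum_congr rfl fun b _ => by ring

theorem dotProduct_self_uncurry (T : ι → ι' → κ → ℝ) :
    (fun p : ι × ι' × κ => T p.1 p.2.1 p.2.2) ⬝ᵥ (fun p : ι × ι' × κ => T p.1 p.2.1 p.2.2) =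
      ∑ i, ∑ j, ∑ a, T i j a ^ 2 := by
  simp only [dotProduct, Fintype.sum_prod_type, sq]

end Matrix

theorem stmt_1_general {n m : ℕ}
    (Du : Fin n → Fin m → ℝ)
    (D2u : Fin n → Fin n → Fin m → ℝ)
    (g : Matrix (Fin n) (Fin n) ℝ)
    (hg : ∀ i j, g i j = (if i = j then (1:ℝ) else 0) + ∑ a, Du i a * Du j a)
    (gN : Matrix (Fin m) (Fin m) ℝ)
    (hgN : ∀ a b, gN a b = (if a = b then (1:ℝ) else 0) + ∑ i, Du i a * Du i b) :
    (∑ i, ∑ k, ∑ j, ∑ l, ∑ a, ∑ b,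
        g⁻¹ i k * g⁻¹ j l * gN⁻¹ a b * D2u i j a * D2u k l b)
      ≤ ∑ i, ∑ j, ∑ a, D2u i j a ^ 2 ∧
    (∑ i, ∑ j, ∑ a, D2u i j a ^ 2)
      ≤ (1 + ∑ i, ∑ a, Du i a ^ 2) ^ 3 *
        (∑ i, ∑ k, ∑ j, ∑ l, ∑ a, ∑ b,
          g⁻¹ i k * g⁻¹ j l * gN⁻¹ a b * D2u i j a * D2u k l b) := by
  set D : Matrix (Fin n) (Fin m) ℝ := of Du
  set c : ℝ := (1 + ∑ i, ∑ a, Du i a ^ 2)⁻¹ with hc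
  have htrace : (D * Dᵀ).trace = ∑ i, ∑ a, Du i a ^ 2 := by
    simp [trace, mul_apply, D, sq]
  have hg_inv : g⁻¹ ∈ Icc (c • 1) 1 := by
    have hgD : g = 1 + D * Dᵀ := by ext i j; simp [hg, one_apply, mul_apply, D]
    rw [hgD, hc, ← htrace]
    simpa using (posSemidef_self_mul_conjTranspose D).inv_one_add_mem_Icc
  have hgN_inv : gN⁻¹ ∈ Icc (c • 1) 1 := by
    have hgND : gN = 1 + Dᵀ * D := by ext a b; simp [hgN, one_apply, mul_apply, D]
    rw [hgND, hc, ← htrace, trace_mul_comm]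
    simpa using (posSemidef_conjTranspose_mul_self D).inv_one_add_mem_Icc
  have hc0 : 0 ≤ c := by positivity
  obtain ⟨hlower, hupper⟩ := dotProduct_mulVec_mem_Icc
    (kronecker_mem_Icc_smul_one hc0 (mul_nonneg hc0 hc0) hg_inv
      (kronecker_mem_Icc_smul_one hc0 hc0 hg_inv hgN_inv)) fun p => D2u p.1 p.2.1 p.2.2
  rw [dotProduct_kronecker_kronecker_mulVec, dotProduct_self_uncurry] at hlower hupper
  refine ⟨hupper, ?_⟩
  calc ∑ i, ∑ j, ∑ a, D2u i j a ^ 2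
      = (1 + ∑ i, ∑ a, Du i a ^ 2) ^ 3 * (c * (c * c) * ∑ i, ∑ j, ∑ a, D2u i j a ^ 2) := by
        rw [hc]
        field_simp
    _ ≤ _ := by gcongr

/-- `|A|²_g ≤ |D²u|² ≤ (1+|Du|²)³ |A|²_g` for graphs. -/
theorem stmt_1 {n m : ℕ} (Ω : Set (Fin n → ℝ)) (hΩ : IsOpen Ω)
    (u : (Fin n → ℝ) → (Fin m → ℝ)) (hu : ContDiffOn ℝ 2 u Ω)
    (x : Fin n → ℝ) (hx : x ∈ Ω)
    (Du : Fin n → Fin m → ℝ)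
    (hDu : ∀ i a, Du i a = fderiv ℝ u x (Pi.single i 1) a)
    (D2u : Fin n → Fin n → Fin m → ℝ)
    (hD2u : ∀ i j a, D2u i j a =
      fderiv ℝ (fun y => fderiv ℝ u y (Pi.single i 1) a) x (Pi.single j 1))
    (g : Matrix (Fin n) (Fin n) ℝ)
    (hg : ∀ i j, g i j = (if i = j then (1:ℝ) else 0) + ∑ a, Du i a * Du j a)
    (gN : Matrix (Fin m) (Fin m) ℝ)
    (hgN : ∀ a b, gN a b = (if a = b then (1:ℝ) else 0) + ∑ i, Du i a * Du i b) :
    (∑ i, ∑ k, ∑ j, ∑ l, ∑ a, ∑ b,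
        g⁻¹ i k * g⁻¹ j l * gN⁻¹ a b * D2u i j a * D2u k l b)
      ≤ ∑ i, ∑ j, ∑ a, D2u i j a ^ 2 ∧
    (∑ i, ∑ j, ∑ a, D2u i j a ^ 2)
      ≤ (1 + ∑ i, ∑ a, Du i a ^ 2) ^ 3 *
        (∑ i, ∑ k, ∑ j, ∑ l, ∑ a, ∑ b,
          g⁻¹ i k * g⁻¹ j l * gN⁻¹ a b * D2u i j a * D2u k l b) :=
  stmt_1_general Du D2u g hg gN hgN
end

section
/- Let u : Ω ⊂ ℝⁿ → ℝᵐ be C³ and let A denote the second fundamental form of the graph of u. Then there exists a dimensional constant C such that |∇A|_g ≤ |D³u| + C|Du||D²u|² and |D³u| ≤ (1+|Du|²)² |∇A|_g + C|Du||D²u|², where ∇ is the covariant derivative induced on the bundle T*Σ ⊗ T*Σ ⊗ NΣ of the graph Σ and |·|_g is the norm induced by the metric g. -/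
/-!
The metrics `g = I + Du Duᵀ` and `g_N = I + Duᵀ Du` satisfy `I ≤ g ≤ (1 + |Du|²) I` in the
Loewner order, so their inverses lie between `(1 + |Du|²)⁻¹ I` and `I`. The Gram matrix of `|·|_g`
on tensors `h_{α ij,k}` is the Kronecker product `g_N⁻¹ ⊗ g⁻¹ ⊗ g⁻¹ ⊗ g⁻¹`, which therefore lies
between `(1 + |Du|²)⁻⁴ I` and `I`; hence `|T|_g ≤ |T| ≤ (1 + |Du|²)² |T|_g`. As `g⁻¹` and `g_N⁻¹`
are contractions, the Christoffel symbols satisfy `|Γ|, |Γ_N| ≤ |Du| |D²u|`, so by Cauchy–Schwarz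
each of the three Christoffel terms of `∇A - D³u` has norm at most `|Du| |D²u|²`. The triangle
inequality gives both estimates with `C = 3`.
-/

open Finset Matrix
open scoped MatrixOrder Kronecker

section StarOrderedRing

variable {R : Type*} [Ring R] [PartialOrder R] [StarRing R] [StarOrderedRing R]

lemma mul_self_le_of_nonneg_of_le_one {a : R} (ha₀ : 0 ≤ a) (ha₁ : a ≤ 1) : a * a ≤ a := by
  have h₁ : IsSelfAdjoint (1 - a) := IsSelfAdjoint.of_nonneg (sub_nonneg.2 ha₁)
  have key : a - a * a = (1 - a) * a * (1 - a) + a * (1 - a) * a := by noncomm_ring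
  rw [← sub_nonneg, key]
  exact add_nonneg (h₁.conjugate_nonneg ha₀)
    ((IsSelfAdjoint.of_nonneg ha₀).conjugate_nonneg (sub_nonneg.2 ha₁))

variable {g h : R}

lemma le_one_of_one_le_of_mul_eq_one (hg : 1 ≤ g) (hh : IsSelfAdjoint h) (hgh : g * h = 1) :
    h ≤ 1 := by
  have hconj : h * (g - 1) * h = h - h * h := by
    rw [mul_sub, mul_one, sub_mul, mul_assoc, hgh, mul_one]
  have key : 1 - h = (1 - h) * (1 - h) + h * (g - 1) * h := by
    rw [hconj]; noncomm_ring
  rw [← sub_nonneg, key]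
  exact add_nonneg ((IsSelfAdjoint.one R).sub hh).mul_self_nonneg
    (hh.conjugate_nonneg (sub_nonneg.2 hg))

lemma one_le_of_le_one_of_mul_eq_one (hg₀ : 0 ≤ g) (hg₁ : g ≤ 1) (hh : IsSelfAdjoint h)
    (hgh : g * h = 1) (hhg : h * g = 1) : 1 ≤ h := by
  have key : h - 1 = h * (g - g * g) * h := by
    rw [mul_sub, sub_mul, mul_assoc h g h, hgh, ← mul_assoc, hhg, one_mul, hgh, mul_one]
  rw [← sub_nonneg, key]
  exact hh.conjugate_nonneg (sub_nonneg.2 (mul_self_le_of_nonneg_of_le_one hg₀ hg₁))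

lemma smul_one_le_of_le_smul_one_of_mul_eq_one [Algebra ℝ R] [StarModule ℝ R] [PosSMulMono ℝ R]
    {s : ℝ} (hs : 0 < s) (hg₀ : 0 ≤ g) (hgs : g ≤ s • 1) (hh : IsSelfAdjoint h)
    (hgh : g * h = 1) (hhg : h * g = 1) : s⁻¹ • (1 : R) ≤ h := by
  have hs' : s⁻¹ * s = 1 := inv_mul_cancel₀ hs.ne'
  have key : 1 ≤ s • h := by
    refine one_le_of_le_one_of_mul_eq_one (g := s⁻¹ • g) (smul_nonneg (inv_nonneg.2 hs.le) hg₀)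
      ?_ ((IsSelfAdjoint.all s).smul hh) ?_ ?_
    · calc s⁻¹ • g ≤ s⁻¹ • s • (1 : R) := smul_le_smul_of_nonneg_left hgs (inv_nonneg.2 hs.le)
        _ = 1 := by rw [smul_smul, hs', one_smul]
    · rw [smul_mul_smul_comm, hs', one_smul, hgh]
    · rw [smul_mul_smul_comm, mul_comm, hs', one_smul, hhg]
  calc s⁻¹ • (1 : R) ≤ s⁻¹ • s • h := smul_le_smul_of_nonneg_left key (inv_nonneg.2 hs.le)
    _ = h := by rw [smul_smul, hs', one_smul]

end StarOrderedRing

namespace Matrix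

section Kronecker

open scoped ComplexOrder

variable {𝕜 ι κ : Type*} [RCLike 𝕜] [Fintype ι] [Fintype κ]

lemma kronecker_le_kronecker_s4 {A B : Matrix ι ι 𝕜} {C D : Matrix κ κ 𝕜}
    (hA : 0 ≤ A) (hAB : A ≤ B) (hC : 0 ≤ C) (hCD : C ≤ D) : A ⊗ₖ C ≤ B ⊗ₖ D := by
  have key : B ⊗ₖ D - A ⊗ₖ C = (B - A) ⊗ₖ D + A ⊗ₖ (D - C) := by
    ext ⟨i, i'⟩ ⟨j, j'⟩; simp; ring
  rw [le_iff, key]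
  exact ((le_iff.1 hAB).kronecker (hC.trans hCD).posSemidef).add
    (hA.posSemidef.kronecker (le_iff.1 hCD))

lemma kronecker_nonneg {A : Matrix ι ι 𝕜} {B : Matrix κ κ 𝕜} (hA : 0 ≤ A) (hB : 0 ≤ B) :
    0 ≤ A ⊗ₖ B :=
  (hA.posSemidef.kronecker hB.posSemidef).nonneg

lemma kronecker_le_one [DecidableEq ι] [DecidableEq κ] {A : Matrix ι ι 𝕜} {B : Matrix κ κ 𝕜}
    (hA₀ : 0 ≤ A) (hA₁ : A ≤ 1) (hB₀ : 0 ≤ B) (hB₁ : B ≤ 1) : A ⊗ₖ B ≤ 1 := by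
  simpa using kronecker_le_kronecker_s4 hA₀ hA₁ hB₀ hB₁

lemma smul_one_le_kronecker [DecidableEq ι] [DecidableEq κ] {A : Matrix ι ι 𝕜}
    {B : Matrix κ κ 𝕜} {c d : ℝ} (hc : 0 ≤ c) (hA : c • 1 ≤ A) (hd : 0 ≤ d) (hB : d • 1 ≤ B) :
    (c * d) • (1 : Matrix (ι × κ) (ι × κ) 𝕜) ≤ A ⊗ₖ B := by
  have hc' : (0 : Matrix ι ι 𝕜) ≤ c • 1 := smul_nonneg hc zero_le_one
  have hd' : (0 : Matrix κ κ 𝕜) ≤ d • 1 := smul_nonneg hd zero_le_one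
  simpa [smul_kronecker, kronecker_smul, smul_smul, mul_comm] using
    kronecker_le_kronecker_s4 hc' hA hd' hB

end Kronecker

variable {ι κ : Type*} [Fintype ι] [Fintype κ]

lemma dotProduct_mulVec_le_of_le {A B : Matrix ι ι ℝ} (hAB : A ≤ B) (x : ι → ℝ) :
    x ⬝ᵥ A *ᵥ x ≤ x ⬝ᵥ B *ᵥ x := by
  have := (le_iff.1 hAB).dotProduct_mulVec_nonneg x
  rwa [star_trivial, sub_mulVec, dotProduct_sub, sub_nonneg] at this

lemma mul_transpose_le_smul_one [DecidableEq ι] (P : Matrix ι κ ℝ) :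
    P * Pᵀ ≤ (∑ i, ∑ b, P i b ^ 2) • 1 := by
  rw [le_iff]
  refine PosSemidef.of_dotProduct_mulVec_nonneg
    ((isHermitian_one.smul (IsSelfAdjoint.all _)).sub (isHermitian_mul_conjTranspose_self P))
    fun x => ?_
  have hquad : x ⬝ᵥ (P * Pᵀ) *ᵥ x = ∑ b, (∑ i, P i b * x i) ^ 2 := by
    rw [← mulVec_mulVec, dotProduct_mulVec, mulVec_transpose]
    simp [dotProduct, vecMul, sq, mul_comm]
  have hcs : ∑ b, (∑ i, P i b * x i) ^ 2 ≤ (∑ i, ∑ b, P i b ^ 2) * ∑ i, x i ^ 2 := by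
    rw [Finset.sum_comm, Finset.sum_mul]
    exact Finset.sum_le_sum fun b _ => Finset.sum_mul_sq_le_sq_mul_sq _ _ _
  simp only [star_trivial, sub_mulVec, dotProduct_sub, smul_mulVec, one_mulVec, dotProduct_smul,
    hquad, smul_eq_mul]
  rw [show x ⬝ᵥ x = ∑ i, x i ^ 2 by simp [dotProduct, sq]]
  linarith

lemma sum_sq_mulVec_le [DecidableEq ι] {H : Matrix ι ι ℝ} (hH₀ : 0 ≤ H) (hH₁ : H ≤ 1)
    (w : ι → ℝ) :
    ∑ k, (H *ᵥ w) k ^ 2 ≤ ∑ k, w k ^ 2 := by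
  have hsq : ∑ k, (H *ᵥ w) k ^ 2 = w ⬝ᵥ (H * H) *ᵥ w := by
    have hT : Hᵀ = H := by
      simpa [conjTranspose_eq_transpose_of_trivial] using hH₀.posSemidef.isHermitian.eq
    rw [← mulVec_mulVec, dotProduct_mulVec, ← mulVec_transpose, hT]
    simp [dotProduct, sq]
  rw [hsq, show ∑ k, w k ^ 2 = w ⬝ᵥ (1 : Matrix ι ι ℝ) *ᵥ w by simp [dotProduct, sq]]
  exact dotProduct_mulVec_le_of_le ((mul_self_le_of_nonneg_of_le_one hH₀ hH₁).trans hH₁) w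

end Matrix

section GraphMetric

variable {ι κ : Type*} [Fintype κ] [DecidableEq ι]

/-- With `P = Du` this is the metric `g` of the graph of `u`; `graphMetric Duᵀ` is the metric
`g_N` of its normal bundle. -/
def graphMetric (P : Matrix ι κ ℝ) : Matrix ι ι ℝ := 1 + P * Pᵀ

lemma graphMetric_apply (P : Matrix ι κ ℝ) (i j : ι) :
    graphMetric P i j = (if i = j then 1 else 0) + ∑ b, P i b * P j b := by
  simp [graphMetric, one_apply, mul_apply]

variable [Fintype ι]

lemma one_le_graphMetric (P : Matrix ι κ ℝ) : 1 ≤ graphMetric P := by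
  simpa [graphMetric, le_iff] using posSemidef_self_mul_conjTranspose P

lemma graphMetric_le (P : Matrix ι κ ℝ) :
    graphMetric P ≤ (1 + ∑ i, ∑ b, P i b ^ 2) • 1 := by
  rw [graphMetric, add_smul, one_smul]
  exact add_le_add le_rfl (mul_transpose_le_smul_one P)

lemma posDef_graphMetric (P : Matrix ι κ ℝ) : (graphMetric P).PosDef := by
  simpa [graphMetric] using PosDef.one.add_posSemidef (posSemidef_self_mul_conjTranspose P)

lemma isSelfAdjoint_inv_graphMetric (P : Matrix ι κ ℝ) : IsSelfAdjoint (graphMetric P)⁻¹ :=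
  (posDef_graphMetric P).inv.isHermitian

lemma graphMetric_mul_inv (P : Matrix ι κ ℝ) : graphMetric P * (graphMetric P)⁻¹ = 1 :=
  mul_nonsing_inv _ ((isUnit_iff_isUnit_det _).1 (posDef_graphMetric P).isUnit)

lemma inv_graphMetric_mul (P : Matrix ι κ ℝ) : (graphMetric P)⁻¹ * graphMetric P = 1 :=
  nonsing_inv_mul _ ((isUnit_iff_isUnit_det _).1 (posDef_graphMetric P).isUnit)

lemma inv_graphMetric_le_one (P : Matrix ι κ ℝ) : (graphMetric P)⁻¹ ≤ 1 :=
  le_one_of_one_le_of_mul_eq_one (one_le_graphMetric P) (isSelfAdjoint_inv_graphMetric P)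
    (graphMetric_mul_inv P)

lemma smul_one_le_inv_graphMetric (P : Matrix ι κ ℝ) :
    (1 + ∑ i, ∑ b, P i b ^ 2)⁻¹ • 1 ≤ (graphMetric P)⁻¹ :=
  smul_one_le_of_le_smul_one_of_mul_eq_one (by positivity)
    (zero_le_one.trans (one_le_graphMetric P)) (graphMetric_le P)
    (isSelfAdjoint_inv_graphMetric P) (graphMetric_mul_inv P) (inv_graphMetric_mul P)

lemma inv_graphMetric_nonneg (P : Matrix ι κ ℝ) : 0 ≤ (graphMetric P)⁻¹ :=
  (smul_nonneg (by positivity) zero_le_one).trans (smul_one_le_inv_graphMetric P)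

end GraphMetric

lemma smul_one_le_inv_graphMetric_transpose {ι κ : Type*} [Fintype ι] [Fintype κ]
    [DecidableEq κ] (P : Matrix ι κ ℝ) :
    (1 + ∑ i, ∑ b, P i b ^ 2)⁻¹ • 1 ≤ (graphMetric Pᵀ)⁻¹ := by
  simpa only [transpose_apply, Finset.sum_comm (γ := κ)] using smul_one_le_inv_graphMetric Pᵀ

lemma norm_sq_eq_dotProduct {ι : Type*} [Fintype ι] (v : EuclideanSpace ℝ ι) :
    ‖v‖ ^ 2 = v.ofLp ⬝ᵥ v.ofLp := by
  rw [EuclideanSpace.real_norm_sq_eq]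
  simp [dotProduct, sq]

section Tensor

variable {α β γ δ : Type*}

def tensorVec (T : α → β → γ → δ → ℝ) : EuclideanSpace ℝ (((α × β) × γ) × δ) :=
  WithLp.toLp 2 fun x => T x.1.1.1 x.1.1.2 x.1.2 x.2

lemma tensorVec_add (T S : α → β → γ → δ → ℝ) :
    (tensorVec fun a i j k => T a i j k + S a i j k) = tensorVec T + tensorVec S :=
  rfl

variable [Fintype α] [Fintype β] [Fintype γ] [Fintype δ]

lemma norm_tensorVec (T : α → β → γ → δ → ℝ) :
    ‖tensorVec T‖ = √(∑ a, ∑ i, ∑ j, ∑ k, T a i j k ^ 2) := by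
  simp [tensorVec, EuclideanSpace.norm_eq, Fintype.sum_prod_type]

lemma norm_tensorVec_rotate (T : β → γ → δ → α → ℝ) :
    ‖tensorVec fun a i j k => T i j k a‖ = √(∑ i, ∑ j, ∑ k, ∑ a, T i j k a ^ 2) := by
  rw [norm_tensorVec, Finset.sum_comm]
  refine congrArg _ (Finset.sum_congr rfl fun i _ => ?_)
  rw [Finset.sum_comm]
  exact Finset.sum_congr rfl fun j _ => Finset.sum_comm

lemma contraction_eq_dotProduct_kronecker (N : Matrix α α ℝ) (M₁ : Matrix β β ℝ)
    (M₂ : Matrix γ γ ℝ) (M₃ : Matrix δ δ ℝ) (T : α → β → γ → δ → ℝ) :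
    ∑ a, ∑ b, ∑ i, ∑ p, ∑ j, ∑ q, ∑ k, ∑ l,
        T a i j k * T b p q l * M₁ i p * M₂ j q * M₃ k l * N a b
      = (tensorVec T).ofLp ⬝ᵥ (N ⊗ₖ M₁ ⊗ₖ M₂ ⊗ₖ M₃) *ᵥ (tensorVec T).ofLp := by
  simp only [tensorVec, dotProduct, mulVec, Fintype.sum_prod_type, kronecker_apply,
    Finset.mul_sum]
  conv_lhs => enter [2, a]; rw [Finset.sum_comm]
  conv_lhs => enter [2, a, 2, i, 2, b]; rw [Finset.sum_comm]
  conv_lhs => enter [2, a, 2, i]; rw [Finset.sum_comm]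
  conv_lhs => enter [2, a, 2, i, 2, j, 2, b, 2, p]; rw [Finset.sum_comm]
  conv_lhs => enter [2, a, 2, i, 2, j, 2, b]; rw [Finset.sum_comm]
  conv_lhs => enter [2, a, 2, i, 2, j]; rw [Finset.sum_comm]
  ac_rfl

variable [DecidableEq α] [DecidableEq β]

lemma sqrt_contraction_le_norm_tensorVec {N : Matrix α α ℝ} {M : Matrix β β ℝ}
    (hN₀ : 0 ≤ N) (hN₁ : N ≤ 1) (hM₀ : 0 ≤ M) (hM₁ : M ≤ 1) (T : α → β → β → β → ℝ) :
    √(∑ a, ∑ b, ∑ i, ∑ p, ∑ j, ∑ q, ∑ k, ∑ l,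
        T a i j k * T b p q l * M i p * M j q * M k l * N a b) ≤ ‖tensorVec T‖ := by
  have hK₂ : N ⊗ₖ M ⊗ₖ M ≤ 1 := kronecker_le_one (kronecker_nonneg hN₀ hM₀)
    (kronecker_le_one hN₀ hN₁ hM₀ hM₁) hM₀ hM₁
  have hK₃ : N ⊗ₖ M ⊗ₖ M ⊗ₖ M ≤ 1 :=
    kronecker_le_one (kronecker_nonneg (kronecker_nonneg hN₀ hM₀) hM₀) hK₂ hM₀ hM₁
  rw [contraction_eq_dotProduct_kronecker, ← Real.sqrt_sq (norm_nonneg (tensorVec T)),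
    norm_sq_eq_dotProduct]
  exact Real.sqrt_le_sqrt (by simpa using dotProduct_mulVec_le_of_le hK₃ (tensorVec T).ofLp)

lemma norm_tensorVec_le_sq_mul_sqrt_contraction {N : Matrix α α ℝ} {M : Matrix β β ℝ} {s : ℝ}
    (hs : 0 < s) (hN : s⁻¹ • 1 ≤ N) (hM : s⁻¹ • 1 ≤ M) (T : α → β → β → β → ℝ) :
    ‖tensorVec T‖ ≤ s ^ 2 * √(∑ a, ∑ b, ∑ i, ∑ p, ∑ j, ∑ q, ∑ k, ∑ l,
        T a i j k * T b p q l * M i p * M j q * M k l * N a b) := by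
  have hc : 0 ≤ s⁻¹ := inv_nonneg.2 hs.le
  have hK : (s⁻¹ * s⁻¹ * s⁻¹ * s⁻¹) • 1 ≤ N ⊗ₖ M ⊗ₖ M ⊗ₖ M :=
    smul_one_le_kronecker (by positivity) (smul_one_le_kronecker (by positivity)
      (smul_one_le_kronecker hc hN hc hM) hc hM) hc hM
  have hquad := dotProduct_mulVec_le_of_le hK (tensorVec T).ofLp
  rw [smul_mulVec, one_mulVec, dotProduct_smul, smul_eq_mul, ← norm_sq_eq_dotProduct,
    ← contraction_eq_dotProduct_kronecker] at hquad
  set Q := ∑ a, ∑ b, ∑ i, ∑ p, ∑ j, ∑ q, ∑ k, ∑ l,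
    T a i j k * T b p q l * M i p * M j q * M k l * N a b
  have hQ : 0 ≤ Q := le_trans (by positivity) hquad
  refine (pow_le_pow_iff_left₀ (norm_nonneg _) (by positivity) two_ne_zero).1 ?_
  calc ‖tensorVec T‖ ^ 2
      = s ^ 4 * (s⁻¹ * s⁻¹ * s⁻¹ * s⁻¹ * ‖tensorVec T‖ ^ 2) := by field_simp
    _ ≤ s ^ 4 * Q := by gcongr
    _ = (s ^ 2 * √Q) ^ 2 := by rw [mul_pow, Real.sq_sqrt hQ]; ring

end Tensor

section Contraction

variable {α β γ δ ε : Type*} [Fintype α] [Fintype β] [Fintype γ] [Fintype δ] [Fintype ε]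

lemma sum_sq_christoffel_le [DecidableEq δ] {H : Matrix δ δ ℝ} (hH₀ : 0 ≤ H) (hH₁ : H ≤ 1)
    (X : α → β → γ → ℝ) (Y : δ → γ → ℝ) :
    ∑ i, ∑ j, ∑ k, (∑ l, H k l * ∑ r, X i j r * Y l r) ^ 2
      ≤ (∑ i, ∑ j, ∑ r, X i j r ^ 2) * ∑ l, ∑ r, Y l r ^ 2 := by
  rw [Finset.sum_mul]
  refine Finset.sum_le_sum fun i _ => ?_
  rw [Finset.sum_mul]
  refine Finset.sum_le_sum fun j _ => ?_
  calc ∑ k, (∑ l, H k l * ∑ r, X i j r * Y l r) ^ 2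
      = ∑ k, (H *ᵥ fun l => ∑ r, X i j r * Y l r) k ^ 2 := rfl
    _ ≤ ∑ l, (∑ r, X i j r * Y l r) ^ 2 := sum_sq_mulVec_le hH₀ hH₁ _
    _ ≤ ∑ l, (∑ r, X i j r ^ 2) * ∑ r, Y l r ^ 2 :=
        Finset.sum_le_sum fun l _ => Finset.sum_mul_sq_le_sq_mul_sq _ _ _
    _ = (∑ r, X i j r ^ 2) * ∑ l, ∑ r, Y l r ^ 2 := (Finset.mul_sum _ _ _).symm

lemma sum_sq_contract_first_le (Γ : δ → β → ε → ℝ) (S : ε → γ → α → ℝ) :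
    ∑ a, ∑ i, ∑ j, ∑ k, (∑ l, Γ k i l * S l j a) ^ 2
      ≤ (∑ k, ∑ i, ∑ l, Γ k i l ^ 2) * ∑ l, ∑ j, ∑ a, S l j a ^ 2 :=
  calc _ ≤ ∑ a, ∑ i, ∑ j, ∑ k, (∑ l, Γ k i l ^ 2) * ∑ l, S l j a ^ 2 := by
        gcongr with a _ i _ j _ k _; exact Finset.sum_mul_sq_le_sq_mul_sq _ _ _
    _ = (∑ i, ∑ k, ∑ l, Γ k i l ^ 2) * ∑ a, ∑ j, ∑ l, S l j a ^ 2 := by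
        simp only [← Finset.sum_mul, ← Finset.mul_sum]
    _ = _ := by
        rw [Finset.sum_comm (γ := β), Finset.sum_comm_cycle (γ := α)]
        exact congrArg _ (Finset.sum_congr rfl fun _ _ => Finset.sum_comm)

lemma sum_sq_contract_second_le (Γ : δ → γ → ε → ℝ) (S : β → ε → α → ℝ) :
    ∑ a, ∑ i, ∑ j, ∑ k, (∑ l, Γ k j l * S i l a) ^ 2
      ≤ (∑ k, ∑ j, ∑ l, Γ k j l ^ 2) * ∑ i, ∑ l, ∑ a, S i l a ^ 2 :=
  calc _ ≤ ∑ a, ∑ i, ∑ j, ∑ k, (∑ l, Γ k j l ^ 2) * ∑ l, S i l a ^ 2 := by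
        gcongr with a _ i _ j _ k _; exact Finset.sum_mul_sq_le_sq_mul_sq _ _ _
    _ = (∑ j, ∑ k, ∑ l, Γ k j l ^ 2) * ∑ a, ∑ i, ∑ l, S i l a ^ 2 := by
        simp only [← Finset.sum_mul, ← Finset.mul_sum]
    _ = _ := by rw [Finset.sum_comm (γ := γ), Finset.sum_comm_cycle (γ := β)]

lemma sum_sq_contract_normal_le (Γ : δ → α → ε → ℝ) (S : β → γ → ε → ℝ) :
    ∑ a, ∑ i, ∑ j, ∑ k, (∑ b, Γ k a b * S i j b) ^ 2
      ≤ (∑ k, ∑ a, ∑ b, Γ k a b ^ 2) * ∑ i, ∑ j, ∑ b, S i j b ^ 2 :=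
  calc _ ≤ ∑ a, ∑ i, ∑ j, ∑ k, (∑ b, Γ k a b ^ 2) * ∑ b, S i j b ^ 2 := by
        gcongr with a _ i _ j _ k _; exact Finset.sum_mul_sq_le_sq_mul_sq _ _ _
    _ = (∑ a, ∑ k, ∑ b, Γ k a b ^ 2) * ∑ i, ∑ j, ∑ b, S i j b ^ 2 := by
        simp only [← Finset.sum_mul, ← Finset.mul_sum]
    _ = _ := by rw [Finset.sum_comm (γ := α)]

end Contraction

section GraphTensors

variable {α β : Type*} [Fintype α] [Fintype β]

lemma sum_sq_christoffel_tangent_le [DecidableEq β] {Du : Matrix β α ℝ} {D2u : β → β → α → ℝ}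
    {Γ : β → β → β → ℝ}
    (hΓ : ∀ i j k, Γ i j k = ∑ l, (graphMetric Du)⁻¹ k l * ∑ a, D2u i j a * Du l a) :
    ∑ i, ∑ j, ∑ k, Γ i j k ^ 2
      ≤ (∑ i, ∑ a, Du i a ^ 2) * ∑ i, ∑ j, ∑ a, D2u i j a ^ 2 := by
  simp only [hΓ]
  rw [mul_comm]
  exact sum_sq_christoffel_le (inv_graphMetric_nonneg Du) (inv_graphMetric_le_one Du) D2u Du

lemma sum_sq_christoffel_normal_le [DecidableEq α] {Du : Matrix β α ℝ} {D2u : β → β → α → ℝ}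
    {ΓN : β → α → α → ℝ}
    (hΓN : ∀ i a b, ΓN i a b = ∑ c, (graphMetric Duᵀ)⁻¹ b c * ∑ k, D2u i k a * Du k c) :
    ∑ i, ∑ a, ∑ b, ΓN i a b ^ 2
      ≤ (∑ i, ∑ a, Du i a ^ 2) * ∑ i, ∑ j, ∑ a, D2u i j a ^ 2 := by
  simp only [hΓN]
  have := sum_sq_christoffel_le (inv_graphMetric_nonneg Duᵀ) (inv_graphMetric_le_one Duᵀ)
    (fun i a k => D2u i k a) (fun c k => Du k c)
  have hD2u : ∑ i, ∑ a, ∑ k, D2u i k a ^ 2 = ∑ i, ∑ j, ∑ a, D2u i j a ^ 2 :=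
    Finset.sum_congr rfl fun _ _ => Finset.sum_comm
  have hDu : ∑ c, ∑ k, Du k c ^ 2 = ∑ i, ∑ a, Du i a ^ 2 := Finset.sum_comm
  rwa [hD2u, hDu, mul_comm] at this

lemma norm_tensorVec_christoffel_terms_le {Γ : β → β → β → ℝ} {ΓN : β → α → α → ℝ}
    {h : β → β → α → ℝ} {t : ℝ} (ht : 0 ≤ t)
    (hΓ : ∑ i, ∑ j, ∑ k, Γ i j k ^ 2 ≤ t * ∑ i, ∑ j, ∑ a, h i j a ^ 2)
    (hΓN : ∑ i, ∑ a, ∑ b, ΓN i a b ^ 2 ≤ t * ∑ i, ∑ j, ∑ a, h i j a ^ 2) :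
    ‖tensorVec fun a i j k =>
        ∑ l, Γ k i l * h l j a + ∑ l, Γ k j l * h i l a + ∑ b, ΓN k a b * h i j b‖
      ≤ 3 * (√t * ∑ i, ∑ j, ∑ a, h i j a ^ 2) := by
  set H := ∑ i, ∑ j, ∑ a, h i j a ^ 2
  have hH : 0 ≤ H := by positivity
  have hsqrt : ∀ S, S ≤ t * H * H → √S ≤ √t * H := fun S hS => by
    rw [← Real.sqrt_sq hH, ← Real.sqrt_mul ht]
    exact Real.sqrt_le_sqrt (by linarith)
  have h₁ := hsqrt _ ((sum_sq_contract_first_le Γ h).trans (mul_le_mul_of_nonneg_right hΓ hH))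
  have h₂ := hsqrt _ ((sum_sq_contract_second_le Γ h).trans (mul_le_mul_of_nonneg_right hΓ hH))
  have h₃ := hsqrt _ ((sum_sq_contract_normal_le ΓN h).trans (mul_le_mul_of_nonneg_right hΓN hH))
  rw [← norm_tensorVec] at h₁ h₂ h₃
  rw [tensorVec_add, tensorVec_add]
  linarith [norm_add₃_le (a := tensorVec fun a i j k => ∑ l, Γ k i l * h l j a)
    (b := tensorVec fun a i j k => ∑ l, Γ k j l * h i l a)
    (c := tensorVec fun a i j k => ∑ b, ΓN k a b * h i j b)]

end GraphTensors

/-- `|∇A|_g ≤ |D³u| + C|Du||D²u|²` and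
`|D³u| ≤ (1+|Du|²)² |∇A|_g + C|Du||D²u|²` for graphs, with a dimensional constant `C`. -/
theorem stmt_4 (n m : ℕ) : ∃ C > (0:ℝ),
    ∀ (Ω : Set (Fin n → ℝ)), IsOpen Ω →
    ∀ (u : (Fin n → ℝ) → (Fin m → ℝ)), ContDiffOn ℝ 3 u Ω →
    ∀ x ∈ Ω,
    ∀ (Du : Fin n → Fin m → ℝ),
      (∀ i a, Du i a = fderiv ℝ u x (Pi.single i 1) a) →
    ∀ (D2u : Fin n → Fin n → Fin m → ℝ),
      (∀ i j a, D2u i j a =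
        fderiv ℝ (fun y => fderiv ℝ u y (Pi.single i 1) a) x (Pi.single j 1)) →
    ∀ (D3u : Fin n → Fin n → Fin n → Fin m → ℝ),
      (∀ i j k a, D3u i j k a =
        fderiv ℝ (fun z =>
          fderiv ℝ (fun y => fderiv ℝ u y (Pi.single i 1) a) z (Pi.single j 1))
          x (Pi.single k 1)) →
    ∀ (g : Matrix (Fin n) (Fin n) ℝ),
      (∀ i j, g i j = (if i = j then (1:ℝ) else 0) + ∑ a, Du i a * Du j a) →
    ∀ (gN : Matrix (Fin m) (Fin m) ℝ),
      (∀ a b, gN a b = (if a = b then (1:ℝ) else 0) + ∑ i, Du i a * Du i b) →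
    ∀ (Γ : Fin n → Fin n → Fin n → ℝ),
      (∀ i j k, Γ i j k = ∑ l, g⁻¹ k l * ∑ a, D2u i j a * Du l a) →
    ∀ (ΓN : Fin n → Fin m → Fin m → ℝ),
      (∀ i a b, ΓN i a b = ∑ c, gN⁻¹ b c * ∑ k, D2u i k a * Du k c) →
    -- covariant derivative components h_{α ij,k}
    ∀ (A1 : Fin m → Fin n → Fin n → Fin n → ℝ),
      (∀ a i j k, A1 a i j k = D3u i j k a
        + ∑ l, Γ k i l * D2u l j a + ∑ l, Γ k j l * D2u i l a
        + ∑ b, ΓN k a b * D2u i j b) →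
    (Real.sqrt (∑ a, ∑ b, ∑ i, ∑ p, ∑ j, ∑ q, ∑ k, ∑ l,
        A1 a i j k * A1 b p q l * g⁻¹ i p * g⁻¹ j q * g⁻¹ k l * gN⁻¹ a b)
      ≤ Real.sqrt (∑ i, ∑ j, ∑ k, ∑ a, D3u i j k a ^ 2)
        + C * Real.sqrt (∑ i, ∑ a, Du i a ^ 2) * (∑ i, ∑ j, ∑ a, D2u i j a ^ 2)) ∧
    (Real.sqrt (∑ i, ∑ j, ∑ k, ∑ a, D3u i j k a ^ 2)
      ≤ (1 + ∑ i, ∑ a, Du i a ^ 2) ^ 2 *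
          Real.sqrt (∑ a, ∑ b, ∑ i, ∑ p, ∑ j, ∑ q, ∑ k, ∑ l,
            A1 a i j k * A1 b p q l * g⁻¹ i p * g⁻¹ j q * g⁻¹ k l * gN⁻¹ a b)
        + C * Real.sqrt (∑ i, ∑ a, Du i a ^ 2) * (∑ i, ∑ j, ∑ a, D2u i j a ^ 2)) := by
  refine ⟨3, by norm_num, ?_⟩
  intro Ω _ u _ x _ Du _ D2u _ D3u _ g hg gN hgN Γ hΓ ΓN hΓN A1 hA1
  obtain rfl : g = graphMetric Du :=
    Matrix.ext fun i j => (hg i j).trans (graphMetric_apply Du i j).symm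
  obtain rfl : gN = graphMetric Duᵀ :=
    Matrix.ext fun a b => (hgN a b).trans (graphMetric_apply Duᵀ a b).symm
  set D := tensorVec fun a i j k => D3u i j k a
  set E := tensorVec fun a i j k =>
    ∑ l, Γ k i l * D2u l j a + ∑ l, Γ k j l * D2u i l a + ∑ b, ΓN k a b * D2u i j b
  have hE : ‖E‖ ≤ 3 * (√(∑ i, ∑ a, Du i a ^ 2) * ∑ i, ∑ j, ∑ a, D2u i j a ^ 2) :=
    norm_tensorVec_christoffel_terms_le (by positivity) (sum_sq_christoffel_tangent_le hΓ)
      (sum_sq_christoffel_normal_le hΓN)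
  have hA1 : tensorVec A1 = D + E := by
    rw [← tensorVec_add]; congr 1; funext a i j k; rw [hA1]; ring
  have hup := sqrt_contraction_le_norm_tensorVec (inv_graphMetric_nonneg Duᵀ)
    (inv_graphMetric_le_one Duᵀ) (inv_graphMetric_nonneg Du) (inv_graphMetric_le_one Du) A1
  have hlow := norm_tensorVec_le_sq_mul_sqrt_contraction (by positivity)
    (smul_one_le_inv_graphMetric_transpose Du) (smul_one_le_inv_graphMetric Du) A1
  rw [hA1] at hup hlow
  have hD : ‖D‖ ≤ ‖D + E‖ + ‖E‖ := by simpa using norm_sub_le (D + E) E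
  constructor <;> linarith [norm_add_le D E, norm_tensorVec_rotate D3u]
end

section
/- Let γ(t,s) be a smooth family of arclength-parametrized curves in ℝ³ solving the vortex filament equation γ_t = γ_s × γ_ss. Suppose {N₁, N₂} is a parallel orthonormal frame of the normal bundle (∇_s N_i = 0, JN₁ = N₂) and write γ_ss = a¹N₁ + a²N₂. Then the complex function Φ = a¹ + i a² satisfies, after a time-dependent phase change Ψ = Φ·exp(i∫A(t)dt), the cubic nonlinear Schrödinger equation −iΨ_t = Ψ_ss + (1/2)|Ψ|²Ψ. -/
noncomputable section Stmt9

namespace Stmt9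

/-- s-derivative of the curve. -/
def gs (γ : ℝ → ℝ → (Fin 3 → ℝ)) (t s : ℝ) : Fin 3 → ℝ :=
  deriv (fun s' => γ t s') s

/-- second s-derivative of the curve. -/
def gss (γ : ℝ → ℝ → (Fin 3 → ℝ)) (t s : ℝ) : Fin 3 → ℝ :=
  deriv (fun s' => gs γ t s') s

def dot3 (v w : Fin 3 → ℝ) : ℝ := ∑ a, v a * w a

/-- The Hasimoto function Ψ = (a¹ + i a²)·exp(i ∫₀ᵗ A). -/
def Psi (a1 a2 : ℝ → ℝ → ℝ) (A : ℝ → ℝ) (t s : ℝ) : ℂ :=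
  ((a1 t s : ℂ) + (a2 t s : ℂ) * Complex.I) *
    Complex.exp (Complex.I * ((∫ r in (0:ℝ)..t, A r) : ℝ))

end Stmt9

namespace HasimotoAux

open Stmt9

variable {E : Type*} [NormedAddCommGroup E] [NormedSpace ℝ E]

lemma hasDerivAt_partial2 {F : ℝ × ℝ → E} {t s : ℝ} (hF : DifferentiableAt ℝ F (t, s)) :
    HasDerivAt (fun s' => F (t, s')) (fderiv ℝ F (t, s) (0, 1)) s :=
  hF.hasFDerivAt.comp_hasDerivAt s ((hasDerivAt_const s t).prodMk (hasDerivAt_id s))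

lemma hasDerivAt_partial1 {F : ℝ × ℝ → E} {t s : ℝ} (hF : DifferentiableAt ℝ F (t, s)) :
    HasDerivAt (fun t' => F (t', s)) (fderiv ℝ F (t, s) (1, 0)) t :=
  hF.hasFDerivAt.comp_hasDerivAt t ((hasDerivAt_id t).prodMk (hasDerivAt_const t s))

/-- joint C^∞ smoothness of a function of two real variables -/
def SM (f : ℝ → ℝ → E) : Prop := ContDiff ℝ (⊤ : ℕ∞) (fun p : ℝ × ℝ => f p.1 p.2)

lemma SM.diff2 {f : ℝ → ℝ → E} (hf : SM f) (t s : ℝ) :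
    DifferentiableAt ℝ (fun s' => f t s') s := by
  have h : (fun s' => f t s') = (fun p : ℝ × ℝ => f p.1 p.2) ∘ (fun s' => (t, s')) := rfl
  rw [h]
  exact DifferentiableAt.comp s (hf.differentiable (by simp) (t, s))
    ((differentiableAt_const t).prodMk differentiableAt_id)

lemma SM.diff1 {f : ℝ → ℝ → E} (hf : SM f) (t s : ℝ) :
    DifferentiableAt ℝ (fun t' => f t' s) t := by
  have h : (fun t' => f t' s) = (fun p : ℝ × ℝ => f p.1 p.2) ∘ (fun t' => (t', s)) := rfl
  rw [h]
  exact DifferentiableAt.comp t (hf.differentiable (by simp) (t, s))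
    (differentiableAt_id.prodMk (differentiableAt_const s))

/-- the s-partial derivative of a smooth function is smooth -/
lemma SM.Ds {f : ℝ → ℝ → E} (hf : SM f) :
    SM (fun t s => deriv (fun s' => f t s') s) := by
  have h : (fun p : ℝ × ℝ => deriv (fun s' => f p.1 s') p.2)
      = fun p : ℝ × ℝ => fderiv ℝ (fun q : ℝ × ℝ => f q.1 q.2) p (0, 1) := by
    funext p
    exact (hasDerivAt_partial2 (hf.differentiable (by simp) _)).deriv
  unfold SM
  rw [h]
  exact ((ContinuousLinearMap.apply ℝ E ((0:ℝ), (1:ℝ))).contDiff).comp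
    (hf.fderiv_right (by simp))

/-- the t-partial derivative of a smooth function is smooth -/
lemma SM.Dt {f : ℝ → ℝ → E} (hf : SM f) :
    SM (fun t s => deriv (fun t' => f t' s) t) := by
  have h : (fun p : ℝ × ℝ => deriv (fun t' => f t' p.2) p.1)
      = fun p : ℝ × ℝ => fderiv ℝ (fun q : ℝ × ℝ => f q.1 q.2) p (1, 0) := by
    funext p
    exact (hasDerivAt_partial1 (hf.differentiable (by simp) _)).deriv
  unfold SM
  rw [h]
  exact ((ContinuousLinearMap.apply ℝ E ((1:ℝ), (0:ℝ))).contDiff).comp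
    (hf.fderiv_right (by simp))

/-- Clairaut / Schwarz: partial derivatives of a smooth function commute. -/
lemma SM.swap {f : ℝ → ℝ → E} (hf : SM f) (t s : ℝ) :
    deriv (fun t' => deriv (fun s' => f t' s') s) t
      = deriv (fun s' => deriv (fun t' => f t' s') t) s := by
  set F : ℝ × ℝ → E := fun p => f p.1 p.2 with hFdef
  have hdF : Differentiable ℝ F := hf.differentiable (by simp)
  have hdF' : Differentiable ℝ (fderiv ℝ F) :=
    (hf.fderiv_right (m := ((⊤:ℕ∞) : WithTop ℕ∞)) (by simp)).differentiable
      (by simp)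
  have sym : IsSymmSndFDerivAt ℝ F (t, s) :=
    hf.contDiffAt.isSymmSndFDerivAt (by simp only [minSmoothness_of_isRCLikeNormedField]; exact WithTop.coe_le_coe.mpr (le_top : (2:ℕ∞) ≤ ⊤))
  have e2 : (fun t' => deriv (fun s' => f t' s') s)
      = fun t' => fderiv ℝ F (t', s) ((0:ℝ), (1:ℝ)) := by
    funext t'
    exact (hasDerivAt_partial2 (hdF _)).deriv
  have e1 : (fun s' => deriv (fun t' => f t' s') t)
      = fun s' => fderiv ℝ F (t, s') ((1:ℝ), (0:ℝ)) := by
    funext s'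
    exact (hasDerivAt_partial1 (hdF _)).deriv
  rw [e1, e2]
  have d2 : ∀ p : ℝ × ℝ, DifferentiableAt ℝ (fun q => fderiv ℝ F q ((0:ℝ), (1:ℝ))) p :=
    fun p => (hdF' p).clm_apply (differentiableAt_const _)
  have d1 : ∀ p : ℝ × ℝ, DifferentiableAt ℝ (fun q => fderiv ℝ F q ((1:ℝ), (0:ℝ))) p :=
    fun p => (hdF' p).clm_apply (differentiableAt_const _)
  have L : deriv (fun t' => fderiv ℝ F (t', s) ((0:ℝ), (1:ℝ))) t
      = fderiv ℝ (fun q => fderiv ℝ F q ((0:ℝ),(1:ℝ))) (t, s) ((1:ℝ), (0:ℝ)) :=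
    (hasDerivAt_partial1 (d2 (t, s))).deriv
  have R : deriv (fun s' => fderiv ℝ F (t, s') ((1:ℝ), (0:ℝ))) s
      = fderiv ℝ (fun q => fderiv ℝ F q ((1:ℝ),(0:ℝ))) (t, s) ((0:ℝ), (1:ℝ)) :=
    (hasDerivAt_partial2 (d1 (t, s))).deriv
  rw [L, R, fderiv_clm_apply (hdF' _) (differentiableAt_const _),
    fderiv_clm_apply (hdF' _) (differentiableAt_const _)]
  simp only [fderiv_fun_const, Pi.zero_apply, ContinuousLinearMap.comp_zero, zero_add,
    ContinuousLinearMap.add_apply, ContinuousLinearMap.flip_apply, ContinuousLinearMap.zero_apply]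
  exact sym _ _

lemma dot3_def (v w : Fin 3 → ℝ) : dot3 v w = v 0 * w 0 + v 1 * w 1 + v 2 * w 2 := by
  simp [dot3, Fin.sum_univ_three]

lemma dot3_comm (v w : Fin 3 → ℝ) : dot3 v w = dot3 w v := by
  rw [dot3_def, dot3_def]; ring

lemma dot3_add_left (u v w : Fin 3 → ℝ) : dot3 (u + v) w = dot3 u w + dot3 v w := by
  simp [dot3_def]; ring

lemma dot3_sub_left (u v w : Fin 3 → ℝ) : dot3 (u - v) w = dot3 u w - dot3 v w := by
  simp [dot3_def]; ring

lemma dot3_smul_left (c : ℝ) (v w : Fin 3 → ℝ) : dot3 (c • v) w = c * dot3 v w := by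
  simp [dot3_def]; ring

lemma dot3_add_right (u v w : Fin 3 → ℝ) : dot3 u (v + w) = dot3 u v + dot3 u w := by
  simp [dot3_def]; ring

lemma dot3_sub_right (u v w : Fin 3 → ℝ) : dot3 u (v - w) = dot3 u v - dot3 u w := by
  simp [dot3_def]; ring

lemma dot3_smul_right (c : ℝ) (u v : Fin 3 → ℝ) : dot3 u (c • v) = c * dot3 u v := by
  simp [dot3_def]; ring

lemma hasDerivAt_dot3 {f g : ℝ → Fin 3 → ℝ} {f' g' : Fin 3 → ℝ} {x : ℝ}
    (hf : HasDerivAt f f' x) (hg : HasDerivAt g g' x) :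
    HasDerivAt (fun y => dot3 (f y) (g y)) (dot3 f' (g x) + dot3 (f x) g') x := by
  have h : ∀ i : Fin 3, HasDerivAt (fun y => f y i * g y i) (f' i * g x i + f x i * g' i) x :=
    fun i => (hasDerivAt_pi.1 hf i).mul (hasDerivAt_pi.1 hg i)
  have h2 := ((h 0).add (h 1)).add (h 2)
  have e1 : (fun y => dot3 (f y) (g y))
      = fun y => (f y 0 * g y 0 + f y 1 * g y 1) + f y 2 * g y 2 := by
    funext y; rw [dot3_def]
  rw [e1]
  refine h2.congr_deriv ?_
  rw [dot3_def, dot3_def]; ring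

lemma contDiff_dot3 {α : Type*} [NormedAddCommGroup α] [NormedSpace ℝ α]
    {n : WithTop ℕ∞} {f g : α → Fin 3 → ℝ} (hf : ContDiff ℝ n f) (hg : ContDiff ℝ n g) :
    ContDiff ℝ n (fun y => dot3 (f y) (g y)) := by
  have e1 : (fun y => dot3 (f y) (g y))
      = fun y => (f y 0 * g y 0 + f y 1 * g y 1) + f y 2 * g y 2 := by
    funext y; rw [dot3_def]
  rw [e1]
  exact (((contDiff_pi.1 hf 0).mul (contDiff_pi.1 hg 0)).add
    ((contDiff_pi.1 hf 1).mul (contDiff_pi.1 hg 1))).add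
    ((contDiff_pi.1 hf 2).mul (contDiff_pi.1 hg 2))

lemma cross_cross_self (u v : Fin 3 → ℝ) :
    crossProduct u (crossProduct u v) = dot3 u v • u - dot3 u u • v := by
  funext i
  fin_cases i <;>
    simp [crossProduct, dot3_def, Pi.smul_apply, smul_eq_mul] <;> ring

lemma cross_combo (u x y : Fin 3 → ℝ) (a b : ℝ) :
    crossProduct u (a • x + b • y) = a • crossProduct u x + b • crossProduct u y := by
  funext i
  fin_cases i <;>
    simp [crossProduct, Pi.smul_apply, smul_eq_mul] <;> ring

lemma hasDerivAt_const_eq_zero {f : ℝ → E} {c d : E} {x : ℝ}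
    (h : HasDerivAt f d x) (hc : ∀ y, f y = c) : d = 0 := by
  have hfc : f = fun _ => c := funext hc
  rw [hfc] at h
  exact ((hasDerivAt_const x c).unique h).symm

end HasimotoAux

open HasimotoAux

open Stmt9 in
/-- Hasimoto transformation. Along the vortex filament flow
`γ_t = γ_s × γ_ss`, with a parallel orthonormal normal frame `{N₁, N₂ = JN₁}`
and `γ_ss = a¹N₁ + a²N₂`, there is a time-dependent phase such that
`Ψ = (a¹ + i a²) e^{i∫A}` solves the cubic NLS `−iΨ_t = Ψ_ss + ½|Ψ|²Ψ`. -/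
theorem stmt_9 (γ : ℝ → ℝ → (Fin 3 → ℝ))
    (hγ : ContDiff ℝ (⊤ : ℕ∞) (fun p : ℝ × ℝ => γ p.1 p.2))
    (harc : ∀ t s, dot3 (gs γ t s) (gs γ t s) = 1)
    (hflow : ∀ t s, deriv (fun t' => γ t' s) t = crossProduct (gs γ t s) (gss γ t s))
    (N1 N2 : ℝ → ℝ → (Fin 3 → ℝ))
    (hN : ContDiff ℝ (⊤ : ℕ∞) (fun p : ℝ × ℝ => N1 p.1 p.2) ∧
          ContDiff ℝ (⊤ : ℕ∞) (fun p : ℝ × ℝ => N2 p.1 p.2))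
    (hN1unit : ∀ t s, dot3 (N1 t s) (N1 t s) = 1)
    (hN2unit : ∀ t s, dot3 (N2 t s) (N2 t s) = 1)
    (hN12 : ∀ t s, dot3 (N1 t s) (N2 t s) = 0)
    (hN1normal : ∀ t s, dot3 (N1 t s) (gs γ t s) = 0)
    (hN2normal : ∀ t s, dot3 (N2 t s) (gs γ t s) = 0)
    -- parallel frame: the normal projection of ∂_s N_i vanishes
    (hpar1 : ∀ t s, deriv (fun s' => N1 t s') s =
      dot3 (deriv (fun s' => N1 t s') s) (gs γ t s) • gs γ t s)
    (hpar2 : ∀ t s, deriv (fun s' => N2 t s') s =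
      dot3 (deriv (fun s' => N2 t s') s) (gs γ t s) • gs γ t s)
    -- J N₁ = N₂, where J is rotation by π/2 in the normal plane
    (hJ : ∀ t s, crossProduct (gs γ t s) (N1 t s) = N2 t s)
    (a1 a2 : ℝ → ℝ → ℝ)
    (hdecomp : ∀ t s, gss γ t s = a1 t s • N1 t s + a2 t s • N2 t s) :
    ∃ A : ℝ → ℝ, ∀ t s,
      (-Complex.I) * deriv (fun t' => Psi a1 a2 A t' s) t =
        deriv (fun s' => deriv (fun s'' => Psi a1 a2 A t s'') s') s +
          (1/2 : ℂ) * (‖Psi a1 a2 A t s‖ : ℂ) ^ 2 * Psi a1 a2 A t s := by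
  classical
  -- joint smoothness
  have hsγ : SM γ := hγ.of_le (by simp)
  have hsN1 : SM N1 := hN.1.of_le (by simp)
  have hsN2 : SM N2 := hN.2.of_le (by simp)
  have hsT : SM (gs γ) := hsγ.Ds
  have hsK : SM (gss γ) := hsT.Ds
  -- identification of the coefficients
  have ha1 : ∀ t s, a1 t s = dot3 (gss γ t s) (N1 t s) := by
    intro t s
    rw [hdecomp t s, dot3_add_left, dot3_smul_left, dot3_smul_left, hN1unit t s,
      dot3_comm (N2 t s) (N1 t s), hN12 t s]
    ring
  have ha2 : ∀ t s, a2 t s = dot3 (gss γ t s) (N2 t s) := by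
    intro t s
    rw [hdecomp t s, dot3_add_left, dot3_smul_left, dot3_smul_left, hN2unit t s, hN12 t s]
    ring
  have hfa1 : a1 = fun t s => dot3 (gss γ t s) (N1 t s) :=
    funext fun t => funext fun s => ha1 t s
  have hfa2 : a2 = fun t s => dot3 (gss γ t s) (N2 t s) :=
    funext fun t => funext fun s => ha2 t s
  have hsa1 : SM a1 := by rw [hfa1]; exact contDiff_dot3 hsK hsN1
  have hsa2 : SM a2 := by rw [hfa2]; exact contDiff_dot3 hsK hsN2
  -- basic s-derivatives
  have hdT2 : ∀ t s, HasDerivAt (fun s' => gs γ t s') (gss γ t s) s :=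
    fun t s => (hsT.diff2 t s).hasDerivAt
  -- ∂ₛ N1 = -a1 T , ∂ₛ N2 = -a2 T
  have hdN12 : ∀ t s, HasDerivAt (fun s' => N1 t s') ((-(a1 t s)) • gs γ t s) s := by
    intro t s
    have hd := (hsN1.diff2 t s).hasDerivAt
    have h0 : dot3 (deriv (fun s' => N1 t s') s) (gs γ t s) + dot3 (N1 t s) (gss γ t s) = 0 :=
      hasDerivAt_const_eq_zero (hasDerivAt_dot3 hd (hdT2 t s)) (fun y => hN1normal t y)
    have h1 : dot3 (N1 t s) (gss γ t s) = a1 t s := by rw [ha1 t s, dot3_comm]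
    have hcoef : dot3 (deriv (fun s' => N1 t s') s) (gs γ t s) = -(a1 t s) := by
      rw [h1] at h0; linarith
    have hp := hpar1 t s
    rw [hcoef] at hp
    rw [← hp]
    exact hd
  have hdN22 : ∀ t s, HasDerivAt (fun s' => N2 t s') ((-(a2 t s)) • gs γ t s) s := by
    intro t s
    have hd := (hsN2.diff2 t s).hasDerivAt
    have h0 : dot3 (deriv (fun s' => N2 t s') s) (gs γ t s) + dot3 (N2 t s) (gss γ t s) = 0 :=
      hasDerivAt_const_eq_zero (hasDerivAt_dot3 hd (hdT2 t s)) (fun y => hN2normal t y)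
    have h1 : dot3 (N2 t s) (gss γ t s) = a2 t s := by rw [ha2 t s, dot3_comm]
    have hcoef : dot3 (deriv (fun s' => N2 t s') s) (gs γ t s) = -(a2 t s) := by
      rw [h1] at h0; linarith
    have hp := hpar2 t s
    rw [hcoef] at hp
    rw [← hp]
    exact hd
  -- the flow in the frame
  have hTN2 : ∀ t s, crossProduct (gs γ t s) (N2 t s) = -N1 t s := by
    intro t s
    rw [← hJ t s, cross_cross_self, dot3_comm (gs γ t s) (N1 t s), hN1normal t s, harc t s]
    simp
  have hflow' : ∀ t s, deriv (fun t' => γ t' s) t = a1 t s • N2 t s - a2 t s • N1 t s := by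
    intro t s
    rw [hflow t s, hdecomp t s, cross_combo, hJ t s, hTN2 t s]
    module
  -- t-derivative of T = gs γ
  have hDtT : ∀ t s, HasDerivAt (fun t' => gs γ t' s)
      (deriv (fun s' => a1 t s') s • N2 t s - deriv (fun s' => a2 t s') s • N1 t s) t := by
    intro t s
    have hd : HasDerivAt (fun s' => a1 t s' • N2 t s' - a2 t s' • N1 t s')
        ((a1 t s • ((-(a2 t s)) • gs γ t s) + deriv (fun s' => a1 t s') s • N2 t s)
          - (a2 t s • ((-(a1 t s)) • gs γ t s) + deriv (fun s' => a2 t s') s • N1 t s)) s :=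
      (((hsa1.diff2 t s).hasDerivAt).smul (hdN22 t s)).sub
        (((hsa2.diff2 t s).hasDerivAt).smul (hdN12 t s))
    have hval : (a1 t s • ((-(a2 t s)) • gs γ t s) + deriv (fun s' => a1 t s') s • N2 t s)
          - (a2 t s • ((-(a1 t s)) • gs γ t s) + deriv (fun s' => a2 t s') s • N1 t s)
        = deriv (fun s' => a1 t s') s • N2 t s - deriv (fun s' => a2 t s') s • N1 t s := by
      module
    rw [hval] at hd
    have hAt := (hsT.diff1 t s).hasDerivAt
    have e : (fun s' => deriv (fun t' => γ t' s') t)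
        = fun s' => a1 t s' • N2 t s' - a2 t s' • N1 t s' := funext fun s' => hflow' t s'
    have hder : deriv (fun t' => gs γ t' s) t
        = deriv (fun s' => a1 t s' • N2 t s' - a2 t s' • N1 t s') s := by
      show deriv (fun t' => deriv (fun s' => γ t' s') s) t = _
      rw [hsγ.swap t s, e]
    rw [hder, hd.deriv] at hAt
    exact hAt
  -- t-derivative of K = gss γ
  have hDtK : ∀ t s, HasDerivAt (fun t' => gss γ t' s)
      (deriv (fun s' => deriv (fun s'' => a1 t s'') s') s • N2 t s
        - deriv (fun s' => deriv (fun s'' => a2 t s'') s') s • N1 t s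
        + (a1 t s * deriv (fun s' => a2 t s') s
            - deriv (fun s' => a1 t s') s * a2 t s) • gs γ t s) t := by
    intro t s
    have hd : HasDerivAt
        (fun s' => deriv (fun s'' => a1 t s'') s' • N2 t s' - deriv (fun s'' => a2 t s'') s' • N1 t s')
        ((deriv (fun s'' => a1 t s'') s • ((-(a2 t s)) • gs γ t s)
            + deriv (fun s' => deriv (fun s'' => a1 t s'') s') s • N2 t s)
          - (deriv (fun s'' => a2 t s'') s • ((-(a1 t s)) • gs γ t s)
            + deriv (fun s' => deriv (fun s'' => a2 t s'') s') s • N1 t s)) s :=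
      (((hsa1.Ds.diff2 t s).hasDerivAt).smul (hdN22 t s)).sub
        (((hsa2.Ds.diff2 t s).hasDerivAt).smul (hdN12 t s))
    have hval : (deriv (fun s'' => a1 t s'') s • ((-(a2 t s)) • gs γ t s)
            + deriv (fun s' => deriv (fun s'' => a1 t s'') s') s • N2 t s)
          - (deriv (fun s'' => a2 t s'') s • ((-(a1 t s)) • gs γ t s)
            + deriv (fun s' => deriv (fun s'' => a2 t s'') s') s • N1 t s)
        = deriv (fun s' => deriv (fun s'' => a1 t s'') s') s • N2 t s
            - deriv (fun s' => deriv (fun s'' => a2 t s'') s') s • N1 t s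
            + (a1 t s * deriv (fun s' => a2 t s') s
                - deriv (fun s' => a1 t s') s * a2 t s) • gs γ t s := by
      module
    rw [hval] at hd
    have hAt := (hsK.diff1 t s).hasDerivAt
    have e : (fun s' => deriv (fun t' => gs γ t' s') t)
        = fun s' => deriv (fun s'' => a1 t s'') s' • N2 t s' - deriv (fun s'' => a2 t s'') s' • N1 t s' :=
      funext fun s' => (hDtT t s').deriv
    have hder : deriv (fun t' => gss γ t' s) t
        = deriv (fun s' => deriv (fun s'' => a1 t s'') s' • N2 t s'
            - deriv (fun s'' => a2 t s'') s' • N1 t s') s := by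
      show deriv (fun t' => deriv (fun s' => gs γ t' s') s) t = _
      rw [hsT.swap t s, e]
    rw [hder, hd.deriv] at hAt
    exact hAt
    -- auxiliary orthogonality facts for t-derivatives
  have hN1tN1 : ∀ t s, dot3 (N1 t s) (deriv (fun t' => N1 t' s) t) = 0 := by
    intro t s
    have hd := (hsN1.diff1 t s).hasDerivAt
    have hdd : HasDerivAt (fun t' => dot3 (N1 t' s) (N1 t' s))
        (dot3 (deriv (fun t' => N1 t' s) t) (N1 t s)
          + dot3 (N1 t s) (deriv (fun t' => N1 t' s) t)) t := hasDerivAt_dot3 hd hd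
    have h0 : dot3 (deriv (fun t' => N1 t' s) t) (N1 t s)
        + dot3 (N1 t s) (deriv (fun t' => N1 t' s) t) = 0 :=
      hasDerivAt_const_eq_zero hdd (fun y => hN1unit y s)
    rw [dot3_comm (deriv (fun t' => N1 t' s) t) (N1 t s)] at h0
    linarith
  have hN2tN2 : ∀ t s, dot3 (N2 t s) (deriv (fun t' => N2 t' s) t) = 0 := by
    intro t s
    have hd := (hsN2.diff1 t s).hasDerivAt
    have hdd : HasDerivAt (fun t' => dot3 (N2 t' s) (N2 t' s))
        (dot3 (deriv (fun t' => N2 t' s) t) (N2 t s)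
          + dot3 (N2 t s) (deriv (fun t' => N2 t' s) t)) t := hasDerivAt_dot3 hd hd
    have h0 : dot3 (deriv (fun t' => N2 t' s) t) (N2 t s)
        + dot3 (N2 t s) (deriv (fun t' => N2 t' s) t) = 0 :=
      hasDerivAt_const_eq_zero hdd (fun y => hN2unit y s)
    rw [dot3_comm (deriv (fun t' => N2 t' s) t) (N2 t s)] at h0
    linarith
  -- dot3 N1 (∂ₜ N2) = - b  where b = dot3 (∂ₜ N1) N2
  have hN1tN2 : ∀ t s, dot3 (N1 t s) (deriv (fun t' => N2 t' s) t)
      = -(dot3 (deriv (fun t' => N1 t' s) t) (N2 t s)) := by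
    intro t s
    have hdd : HasDerivAt (fun t' => dot3 (N1 t' s) (N2 t' s))
        (dot3 (deriv (fun t' => N1 t' s) t) (N2 t s)
          + dot3 (N1 t s) (deriv (fun t' => N2 t' s) t)) t :=
      hasDerivAt_dot3 (hsN1.diff1 t s).hasDerivAt (hsN2.diff1 t s).hasDerivAt
    have h0 : dot3 (deriv (fun t' => N1 t' s) t) (N2 t s)
        + dot3 (N1 t s) (deriv (fun t' => N2 t' s) t) = 0 :=
      hasDerivAt_const_eq_zero hdd (fun y => hN12 y s)
    linarith
  -- dot3 (∂ₜ N1) T = ∂ₛ a2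
  have hN1tT : ∀ t s, dot3 (deriv (fun t' => N1 t' s) t) (gs γ t s)
      = deriv (fun s' => a2 t s') s := by
    intro t s
    have hdd : HasDerivAt (fun t' => dot3 (N1 t' s) (gs γ t' s))
        (dot3 (deriv (fun t' => N1 t' s) t) (gs γ t s)
          + dot3 (N1 t s)
            (deriv (fun s' => a1 t s') s • N2 t s - deriv (fun s' => a2 t s') s • N1 t s)) t :=
      hasDerivAt_dot3 (hsN1.diff1 t s).hasDerivAt (hDtT t s)
    have h0 : dot3 (deriv (fun t' => N1 t' s) t) (gs γ t s)
        + dot3 (N1 t s)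
            (deriv (fun s' => a1 t s') s • N2 t s - deriv (fun s' => a2 t s') s • N1 t s) = 0 :=
      hasDerivAt_const_eq_zero hdd (fun y => hN1normal y s)
    rw [dot3_sub_right, dot3_smul_right, dot3_smul_right, hN12 t s,
      dot3_comm (N1 t s) (N1 t s), hN1unit t s] at h0
    linarith
  -- (i):  ∂ₜ a1 = -∂ₛₛ a2 + a2 * b
  have hDta1 : ∀ t s, HasDerivAt (fun t' => a1 t' s)
      (-(deriv (fun s' => deriv (fun s'' => a2 t s'') s') s)
        + a2 t s * dot3 (deriv (fun t' => N1 t' s) t) (N2 t s)) t := by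
    intro t s
    have h := hasDerivAt_dot3 (hDtK t s) (hsN1.diff1 t s).hasDerivAt
    have efun : (fun t' => dot3 (gss γ t' s) (N1 t' s)) = fun t' => a1 t' s :=
      funext fun t' => (ha1 t' s).symm
    rw [efun] at h
    convert h using 1
    rw [dot3_add_left, dot3_sub_left, dot3_smul_left, dot3_smul_left, dot3_smul_left,
      hN1unit t s, dot3_comm (N2 t s) (N1 t s), hN12 t s,
      dot3_comm (gs γ t s) (N1 t s), hN1normal t s, hdecomp t s,
      dot3_add_left, dot3_smul_left, dot3_smul_left, hN1tN1 t s,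
      dot3_comm (N2 t s) (deriv (fun t' => N1 t' s) t),
      dot3_comm (deriv (fun t' => N1 t' s) t) (N2 t s)]
    ring
  -- (ii):  ∂ₜ a2 = ∂ₛₛ a1 - a1 * b
  have hDta2 : ∀ t s, HasDerivAt (fun t' => a2 t' s)
      (deriv (fun s' => deriv (fun s'' => a1 t s'') s') s
        - a1 t s * dot3 (deriv (fun t' => N1 t' s) t) (N2 t s)) t := by
    intro t s
    have h := hasDerivAt_dot3 (hDtK t s) (hsN2.diff1 t s).hasDerivAt
    have efun : (fun t' => dot3 (gss γ t' s) (N2 t' s)) = fun t' => a2 t' s :=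
      funext fun t' => (ha2 t' s).symm
    rw [efun] at h
    convert h using 1
    rw [dot3_add_left, dot3_sub_left, dot3_smul_left, dot3_smul_left, dot3_smul_left,
      hN2unit t s, hN12 t s, dot3_comm (gs γ t s) (N2 t s), hN2normal t s, hdecomp t s,
      dot3_add_left, dot3_smul_left, dot3_smul_left, hN2tN2 t s, hN1tN2 t s]
    ring
  -- (iii): ∂ₛ b = -(a1 ∂ₛa1 + a2 ∂ₛa2)
  have hDsb : ∀ t s, HasDerivAt (fun s' => dot3 (deriv (fun t' => N1 t' s') t) (N2 t s'))
      (-(a1 t s * deriv (fun s' => a1 t s') s + a2 t s * deriv (fun s' => a2 t s') s)) s := by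
    intro t s
    -- s-derivative of ∂ₜN1
    have hP := ((hsN1.Dt).diff2 t s).hasDerivAt
    have e : (fun t' => deriv (fun s' => N1 t' s') s) = fun t' => (-(a1 t' s)) • gs γ t' s :=
      funext fun t' => (hdN12 t' s).deriv
    have hd2 : HasDerivAt (fun t' => (-(a1 t' s)) • gs γ t' s)
        ((-(a1 t s)) • (deriv (fun s' => a1 t s') s • N2 t s - deriv (fun s' => a2 t s') s • N1 t s)
          + (-(deriv (fun t' => a1 t' s) t)) • gs γ t s) t :=
      ((hsa1.diff1 t s).hasDerivAt.neg).smul (hDtT t s)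
    have hvP : deriv (fun s' => deriv (fun t' => N1 t' s') t) s
        = (-(a1 t s)) • (deriv (fun s' => a1 t s') s • N2 t s - deriv (fun s' => a2 t s') s • N1 t s)
          + (-(deriv (fun t' => a1 t' s) t)) • gs γ t s := by
      rw [← hsN1.swap t s, e]
      exact hd2.deriv
    rw [hvP] at hP
    have h := hasDerivAt_dot3 hP (hdN22 t s)
    convert h using 1
    rw [dot3_add_left, dot3_smul_left, dot3_smul_left, dot3_sub_left, dot3_smul_left,
      dot3_smul_left, hN2unit t s, hN12 t s,
      dot3_comm (gs γ t s) (N2 t s), hN2normal t s, dot3_smul_right, hN1tT t s]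
    ring
    -- the phase function
  set A : ℝ → ℝ := fun t => dot3 (deriv (fun t' => N1 t' 0) t) (N2 t 0)
      + (a1 t 0 ^ 2 + a2 t 0 ^ 2) / 2 with hAdef
  refine ⟨A, ?_⟩
  -- b is independent of s after adding |Φ|²/2
  have hbA : ∀ t s, dot3 (deriv (fun t' => N1 t' s) t) (N2 t s)
      = A t - (a1 t s ^ 2 + a2 t s ^ 2) / 2 := by
    intro t s
    have hg : ∀ s', HasDerivAt (fun y => dot3 (deriv (fun t' => N1 t' y) t) (N2 t y)
          + (a1 t y ^ 2 + a2 t y ^ 2) / 2) 0 s' := by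
      intro s'
      have h2 := (((hsa1.diff2 t s').hasDerivAt.pow 2).add
        ((hsa2.diff2 t s').hasDerivAt.pow 2)).div_const 2
      have h3 := (hDsb t s').add h2
      refine h3.congr_deriv ?_
      push_cast
      ring
    have hdiff : Differentiable ℝ (fun y => dot3 (deriv (fun t' => N1 t' y) t) (N2 t y)
        + (a1 t y ^ 2 + a2 t y ^ 2) / 2) := fun s' => (hg s').differentiableAt
    have hconst := is_const_of_deriv_eq_zero hdiff (fun s' => (hg s').deriv) s 0
    simp only [hAdef]
    linarith [hconst]
  -- continuity of A
  have hsb : SM (fun t s => dot3 (deriv (fun t' => N1 t' s) t) (N2 t s)) :=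
    contDiff_dot3 hsN1.Dt hsN2
  have hAc : Continuous A := by
    rw [hAdef]
    have c0 : Continuous fun t : ℝ => (t, (0:ℝ)) := continuous_id.prodMk continuous_const
    have c1 : Continuous fun t => dot3 (deriv (fun t' => N1 t' 0) t) (N2 t 0) :=
      (hsb.continuous).comp c0
    have ca1 : Continuous fun t => a1 t 0 := (hsa1.continuous).comp c0
    have ca2 : Continuous fun t => a2 t 0 := (hsa2.continuous).comp c0
    exact c1.add (((ca1.pow 2).add (ca2.pow 2)).div_const 2)
  -- final verification
  intro t s
  have hθ : HasDerivAt (fun u => ∫ r in (0:ℝ)..u, A r) (A t) t :=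
    intervalIntegral.integral_hasDerivAt_right (hAc.intervalIntegrable 0 t)
      (hAc.stronglyMeasurableAtFilter _ _) hAc.continuousAt
  have hexp : HasDerivAt
      (fun t' => Complex.exp (Complex.I * ((∫ r in (0:ℝ)..t', A r : ℝ) : ℂ)))
      (Complex.exp (Complex.I * ((∫ r in (0:ℝ)..t, A r : ℝ) : ℂ)) * (Complex.I * (A t : ℂ))) t :=
    ((hθ.ofReal_comp).const_mul Complex.I).cexp
  have hz1 : HasDerivAt (fun t' => ((a1 t' s : ℝ) : ℂ))
      ((( -(deriv (fun s' => deriv (fun s'' => a2 t s'') s') s)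
        + a2 t s * dot3 (deriv (fun t' => N1 t' s) t) (N2 t s) : ℝ)) : ℂ) t :=
    (hDta1 t s).ofReal_comp
  have hz2 : HasDerivAt (fun t' => ((a2 t' s : ℝ) : ℂ))
      (((deriv (fun s' => deriv (fun s'' => a1 t s'') s') s
        - a1 t s * dot3 (deriv (fun t' => N1 t' s) t) (N2 t s) : ℝ)) : ℂ) t :=
    (hDta2 t s).ofReal_comp
  have hΦ := hz1.add (hz2.mul_const Complex.I)
  have eL : HasDerivAt (fun t' => Psi a1 a2 A t' s)
      ((((-(deriv (fun s' => deriv (fun s'' => a2 t s'') s') s)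
            + a2 t s * dot3 (deriv (fun t' => N1 t' s) t) (N2 t s) : ℝ) : ℂ)
          + ((deriv (fun s' => deriv (fun s'' => a1 t s'') s') s
            - a1 t s * dot3 (deriv (fun t' => N1 t' s) t) (N2 t s) : ℝ) : ℂ) * Complex.I)
          * Complex.exp (Complex.I * ((∫ r in (0:ℝ)..t, A r : ℝ) : ℂ))
        + ((a1 t s : ℂ) + (a2 t s : ℂ) * Complex.I)
          * (Complex.exp (Complex.I * ((∫ r in (0:ℝ)..t, A r : ℝ) : ℂ))
              * (Complex.I * (A t : ℂ)))) t := hΦ.mul hexp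
  have hs1 : ∀ s', HasDerivAt (fun s'' => Psi a1 a2 A t s'')
      ((((deriv (fun s'' => a1 t s'') s' : ℝ) : ℂ)
          + ((deriv (fun s'' => a2 t s'') s' : ℝ) : ℂ) * Complex.I)
        * Complex.exp (Complex.I * ((∫ r in (0:ℝ)..t, A r : ℝ) : ℂ))) s' := by
    intro s'
    exact (((hsa1.diff2 t s').hasDerivAt.ofReal_comp).add
      (((hsa2.diff2 t s').hasDerivAt.ofReal_comp).mul_const Complex.I)).mul_const _
  have eS1 : (fun s' => deriv (fun s'' => Psi a1 a2 A t s'') s')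
      = fun s' => (((deriv (fun s'' => a1 t s'') s' : ℝ) : ℂ)
          + ((deriv (fun s'' => a2 t s'') s' : ℝ) : ℂ) * Complex.I)
        * Complex.exp (Complex.I * ((∫ r in (0:ℝ)..t, A r : ℝ) : ℂ)) :=
    funext fun s' => (hs1 s').deriv
  have eS2 : HasDerivAt (fun s' => deriv (fun s'' => Psi a1 a2 A t s'') s')
      ((((deriv (fun s' => deriv (fun s'' => a1 t s'') s') s : ℝ) : ℂ)
          + ((deriv (fun s' => deriv (fun s'' => a2 t s'') s') s : ℝ) : ℂ) * Complex.I)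
        * Complex.exp (Complex.I * ((∫ r in (0:ℝ)..t, A r : ℝ) : ℂ))) s := by
    rw [eS1]
    exact (((hsa1.Ds.diff2 t s).hasDerivAt.ofReal_comp).add
      (((hsa2.Ds.diff2 t s).hasDerivAt.ofReal_comp).mul_const Complex.I)).mul_const _
  have habs : ‖Psi a1 a2 A t s‖ ^ 2 = a1 t s ^ 2 + a2 t s ^ 2 := by
    simp only [Psi, norm_mul]
    rw [mul_pow, Complex.sq_norm, Complex.normSq_add_mul_I, mul_comm Complex.I,
      Complex.norm_exp_ofReal_mul_I, one_pow, mul_one]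
  have habs' : ((‖Psi a1 a2 A t s‖ : ℂ)) ^ 2
      = (((a1 t s ^ 2 + a2 t s ^ 2 : ℝ)) : ℂ) := by
    rw [← habs]
    push_cast
    ring
  rw [eL.deriv, eS2.deriv, habs']
  simp only [Psi]
  rw [hbA t s]
  push_cast
  linear_combination ((-(Complex.I * Complex.exp (Complex.I * ((∫ r in (0:ℝ)..t, A r : ℝ) : ℂ))
      * ((a2 t s : ℝ):ℂ) * ((A t : ℝ):ℂ)))
    + (-(((a1 t s :ℝ):ℂ) * (((a1 t s:ℝ):ℂ)^2 + ((a2 t s:ℝ):ℂ)^2))/2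
        - ((deriv (fun s' => deriv (fun s'' => a1 t s'') s') s : ℝ):ℂ))
      * Complex.exp (Complex.I * ((∫ r in (0:ℝ)..t, A r : ℝ) : ℂ))) * Complex.I_sq
end Stmt9
end
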